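/- arXiv:1910.10295 — 4 statements merged into one kernel-verified Lean document; each statement's English description precedes it below -/
import Mathlib

section
/- Let H be a real inner product space, let a : ℕ → H be a sequence, and let N ≥ 2 be a natural number. Then Σ_{n=2}^{N} (1/2)·⟨3a_n − 4a_{n−1} + a_{n−2}, a_n⟩ = (1/4)·(‖a_N‖² + ‖2a_N − a_{N−1}‖² − ‖a_1‖² − ‖2a_1 − a_0‖²) + (1/4)·Σ_{n=2}^{N} ‖a_n − 2a_{n−1} + a_{n−2}‖². -/
/-!
Each summand splits as the increment of the BDF2 energy `‖aₙ‖² + ‖2aₙ - aₙ₋₁‖²` plus the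
numerical dissipation `‖aₙ - 2aₙ₋₁ + aₙ₋₂‖²`, so the sum telescopes.
-/

open scoped RealInnerProductSpace

open Finset

theorem Finset.sum_Icc_succ_sub_pred {G : Type*} [AddCommGroup G] (f : ℕ → G) {m n : ℕ}
    (hmn : m ≤ n) : ∑ i ∈ Icc (m + 1) n, (f i - f (i - 1)) = f n - f m := by
  induction n, hmn using Nat.le_induction with
  | base => simp
  | succ n hmn ih =>
    rw [sum_Icc_succ_top (by omega), ih, Nat.add_sub_cancel]
    abel

section BDF2

variable {H : Type*} [NormedAddCommGroup H] [InnerProductSpace ℝ H]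

/-- Four times the BDF2 `G`-norm energy of consecutive iterates `x = aₙ₋₁`, `y = aₙ`. -/
def bdf2Energy (x y : H) : ℝ := ‖y‖ ^ 2 + ‖(2 : ℝ) • y - x‖ ^ 2

theorem bdf2_inner_eq (x y z : H) :
    (1 / 2) * ⟪(3 : ℝ) • z - (4 : ℝ) • y + x, z⟫
      = (1 / 4) * (bdf2Energy y z - bdf2Energy x y) + (1 / 4) * ‖z - (2 : ℝ) • y + x‖ ^ 2 := by
  simp only [bdf2Energy, ← real_inner_self_eq_norm_sq, inner_sub_left, inner_sub_right,
    inner_add_left, inner_add_right, real_inner_smul_left, real_inner_smul_right,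
    real_inner_comm x y, real_inner_comm x z, real_inner_comm y z]
  ring

end BDF2

/-- Telescoped BDF2 polarization identity: summing Lemma 3.3 over n = 2, …, N. -/
theorem bdf2_polarization_identity_sum
    {H : Type*} [NormedAddCommGroup H] [InnerProductSpace ℝ H]
    (a : ℕ → H) (N : ℕ) (hN : 2 ≤ N) :
    ∑ n ∈ Finset.Icc 2 N,
        (1 / 2) * ⟪(3 : ℝ) • a n - (4 : ℝ) • a (n - 1) + a (n - 2), a n⟫
      = (1 / 4) * (‖a N‖ ^ 2 + ‖(2 : ℝ) • a N - a (N - 1)‖ ^ 2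
            - ‖a 1‖ ^ 2 - ‖(2 : ℝ) • a 1 - a 0‖ ^ 2)
        + (1 / 4) * ∑ n ∈ Finset.Icc 2 N,
            ‖a n - (2 : ℝ) • a (n - 1) + a (n - 2)‖ ^ 2 := by
  set E : ℕ → ℝ := fun n ↦ bdf2Energy (a (n - 1)) (a n) with hE
  have hstep : ∀ n ∈ Icc 2 N,
      (1 / 2) * ⟪(3 : ℝ) • a n - (4 : ℝ) • a (n - 1) + a (n - 2), a n⟫
        = (1 / 4) * (E n - E (n - 1)) + (1 / 4) * ‖a n - (2 : ℝ) • a (n - 1) + a (n - 2)‖ ^ 2 := by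
    intro n _
    rw [bdf2_inner_eq]
    simp only [hE, Nat.sub_sub]
  rw [sum_congr rfl hstep, sum_add_distrib, ← mul_sum, ← mul_sum,
    sum_Icc_succ_sub_pred E (by omega : 1 ≤ N)]
  simp only [hE, bdf2Energy, Nat.sub_self]
  ring
end

section
/- Let E be a real Banach space. There exists a constant C > 0 (independent of the function, the time, and the step size) such that for every t ∈ ℝ, every h > 0, and every function v : ℝ → E that is continuously differentiable on the interval [t − 2h, t] with derivative v′, one has ‖(3·v(t) − 4·v(t − h) + v(t − 2h))/(2h)‖² ≤ C·h⁻¹·∫_{t−2h}^{t} ‖v′(s)‖² ds. -/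
/-!
Writing `m = t - h`, the BDF2 combination is `3 (v t - v m) - (v m - v (t - 2h))`, so by the
fundamental theorem of calculus its norm is at most `3 ∫_{t-2h}^t ‖v'‖`. Cauchy–Schwarz on an
interval of length `2h` bounds the square of this integral by `2h ∫_{t-2h}^t ‖v'‖²`, which gives
the estimate with `C = 9/2`.
-/

open intervalIntegral Set
open MeasureTheory (volume)

theorem sq_integral_le_mul_integral_sq {f : ℝ → ℝ} {a b : ℝ} (hab : a ≤ b)
    (hf : IntervalIntegrable f volume a b)
    (hf2 : IntervalIntegrable (fun s => f s ^ 2) volume a b) :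
    (∫ s in a..b, f s) ^ 2 ≤ (b - a) * ∫ s in a..b, f s ^ 2 := by
  set X := ∫ s in a..b, f s
  set I := ∫ s in a..b, f s ^ 2
  -- `0 ≤ ∫ (f - c)²`, to be evaluated at the mean value `c = X / (b - a)`
  have variance (c : ℝ) : 0 ≤ I - 2 * c * X + c ^ 2 * (b - a) := by
    have hexpand : (fun s => (f s - c) ^ 2) = fun s => f s ^ 2 - 2 * c * f s + c ^ 2 := by
      ext s; ring
    calc 0 ≤ ∫ s in a..b, (f s - c) ^ 2 := integral_nonneg hab fun s _ => sq_nonneg _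
      _ = I - 2 * c * X + c ^ 2 * (b - a) := by
        rw [hexpand, integral_add (hf2.sub (hf.const_mul _)) intervalIntegrable_const,
          integral_sub hf2 (hf.const_mul _), integral_const_mul, integral_const, smul_eq_mul,
          mul_comm (b - a)]
  rcases hab.eq_or_lt with rfl | hlt
  · simp [X]
  · have hL : 0 < b - a := sub_pos.mpr hlt
    have := variance (X / (b - a))
    field_simp at this
    nlinarith

section

variable {E : Type*} [NormedAddCommGroup E] [NormedSpace ℝ E] {v v' : ℝ → E} {a b : ℝ}

theorem norm_sub_le_integral_norm_of_hasDerivAt (hab : a ≤ b) (hv : ContinuousOn v (Icc a b))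
    (hderiv : ∀ s ∈ Ioo a b, HasDerivAt v (v' s) s)
    (hint : IntervalIntegrable (fun s => ‖v' s‖) volume a b) :
    ‖v b - v a‖ ≤ ∫ s in a..b, ‖v' s‖ :=
  norm_sub_le_integral_of_norm_deriv_le_of_le hab hv
    (fun s hs => (hderiv s hs).differentiableAt.differentiableWithinAt)
    (.of_forall fun s hs => (hderiv s hs).deriv ▸ le_rfl) hint

theorem norm_bdf2_combination_le {m : ℝ} (ham : a ≤ m) (hmb : m ≤ b)
    (hv : ContinuousOn v (Icc a b)) (hderiv : ∀ s ∈ Ioo a b, HasDerivAt v (v' s) s)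
    (hint : IntervalIntegrable (fun s => ‖v' s‖) volume a b) :
    ‖(3 : ℝ) • v b - (4 : ℝ) • v m + v a‖ ≤ 3 * ∫ s in a..b, ‖v' s‖ := by
  have hint_am : IntervalIntegrable (fun s => ‖v' s‖) volume a m := hint.mono_set <| by
    rw [uIcc_of_le ham, uIcc_of_le (ham.trans hmb)]; exact Icc_subset_Icc_right hmb
  have hint_mb : IntervalIntegrable (fun s => ‖v' s‖) volume m b := hint.mono_set <| by
    rw [uIcc_of_le hmb, uIcc_of_le (ham.trans hmb)]; exact Icc_subset_Icc_left ham
  have h_am : ‖v m - v a‖ ≤ ∫ s in a..m, ‖v' s‖ :=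
    norm_sub_le_integral_norm_of_hasDerivAt ham (hv.mono (Icc_subset_Icc_right hmb))
      (fun s hs => hderiv s (Ioo_subset_Ioo_right hmb hs)) hint_am
  have h_mb : ‖v b - v m‖ ≤ ∫ s in m..b, ‖v' s‖ :=
    norm_sub_le_integral_norm_of_hasDerivAt hmb (hv.mono (Icc_subset_Icc_left ham))
      (fun s hs => hderiv s (Ioo_subset_Ioo_left ham hs)) hint_mb
  have h_am_nonneg : 0 ≤ ∫ s in a..m, ‖v' s‖ := integral_nonneg ham fun s _ => norm_nonneg _
  calc ‖(3 : ℝ) • v b - (4 : ℝ) • v m + v a‖ = ‖(3 : ℝ) • (v b - v m) - (v m - v a)‖ := by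
        congr 1; module
    _ ≤ 3 * ‖v b - v m‖ + ‖v m - v a‖ := by
        grw [norm_sub_le, norm_smul, Real.norm_ofNat]
    _ ≤ 3 * ((∫ s in a..m, ‖v' s‖) + ∫ s in m..b, ‖v' s‖) := by linarith
    _ = 3 * ∫ s in a..b, ‖v' s‖ := by rw [integral_add_adjacent_intervals hint_am hint_mb]

end

theorem bdf2_difference_quotient_bound_general
    {E : Type*} [NormedAddCommGroup E] [NormedSpace ℝ E] :
    ∃ C : ℝ, 0 < C ∧
      ∀ (t h : ℝ), 0 < h →
        ∀ (v v' : ℝ → E),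
          (∀ s ∈ Set.Icc (t - 2 * h) t,
              HasDerivWithinAt v (v' s) (Set.Icc (t - 2 * h) t) s) →
          ContinuousOn v' (Set.Icc (t - 2 * h) t) →
          ‖(1 / (2 * h)) • ((3 : ℝ) • v t - (4 : ℝ) • v (t - h) + v (t - 2 * h))‖ ^ 2
            ≤ C * h⁻¹ * ∫ s in (t - 2 * h)..t, ‖v' s‖ ^ 2 := by
  refine ⟨9 / 2, by norm_num, fun t h hh v v' hv hv' => ?_⟩
  have hab : t - 2 * h ≤ t := by linarith
  have hnorm : ContinuousOn (fun s => ‖v' s‖) (Icc (t - 2 * h) t) := hv'.norm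
  have hcomb := norm_bdf2_combination_le (m := t - h) (by linarith) (by linarith)
    (fun s hs => (hv s hs).continuousWithinAt)
    (fun s hs => (hv s (Ioo_subset_Icc_self hs)).hasDerivAt (Icc_mem_nhds hs.1 hs.2))
    (hnorm.intervalIntegrable_of_Icc hab)
  have hCS := sq_integral_le_mul_integral_sq hab (hnorm.intervalIntegrable_of_Icc hab)
    ((hnorm.pow 2).intervalIntegrable_of_Icc hab)
  rw [sub_sub_cancel] at hCS
  set X := ∫ s in (t - 2 * h)..t, ‖v' s‖
  set I := ∫ s in (t - 2 * h)..t, ‖v' s‖ ^ 2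
  rw [norm_smul, mul_pow, Real.norm_of_nonneg (by positivity)]
  calc (1 / (2 * h)) ^ 2 * ‖(3 : ℝ) • v t - (4 : ℝ) • v (t - h) + v (t - 2 * h)‖ ^ 2
      ≤ (1 / (2 * h)) ^ 2 * (3 * X) ^ 2 := by gcongr
    _ ≤ (1 / (2 * h)) ^ 2 * (9 * (2 * h * I)) := by rw [mul_pow]; gcongr; norm_num
    _ = 9 / 2 * h⁻¹ * I := by field_simp

/-- Estimate (3.6a) of Lemma 3.5: for the BDF2 difference quotient,
    ‖(3v(t) - 4v(t-h) + v(t-2h))/(2h)‖² ≤ C h⁻¹ ∫_{t-2h}^t ‖v'(s)‖² ds. -/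
theorem bdf2_difference_quotient_bound
    {E : Type*} [NormedAddCommGroup E] [NormedSpace ℝ E] [CompleteSpace E] :
    ∃ C : ℝ, 0 < C ∧
      ∀ (t h : ℝ), 0 < h →
        ∀ (v v' : ℝ → E),
          (∀ s ∈ Set.Icc (t - 2 * h) t,
              HasDerivWithinAt v (v' s) (Set.Icc (t - 2 * h) t) s) →
          ContinuousOn v' (Set.Icc (t - 2 * h) t) →
          ‖(1 / (2 * h)) • ((3 : ℝ) • v t - (4 : ℝ) • v (t - h) + v (t - 2 * h))‖ ^ 2
            ≤ C * h⁻¹ * ∫ s in (t - 2 * h)..t, ‖v' s‖ ^ 2 :=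
  bdf2_difference_quotient_bound_general
end

section
/- Let E be a real Banach space. There exists a constant C > 0 (independent of the function, the time, and the step size) such that for every t ∈ ℝ, every h > 0, and every function v : ℝ → E that is three times continuously differentiable on the interval [t − 2h, t] with first derivative v′ and third derivative v‴, one has ‖v′(t) − (3·v(t) − 4·v(t − h) + v(t − 2h))/(2h)‖² ≤ C·h³·∫_{t−2h}^{t} ‖v‴(s)‖² ds. -/
/-!
Expanding `v (t - h)` and `v (t - 2h)` to second order at `t` with integral remainders `R₁`, `R₂`,
the terms of order `0`, `1`, `2` in `3 v(t) - 4 v(t - h) + v(t - 2h)` combine to `2h v'(t)`, so the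
BDF2 error is `(2h)⁻¹ (R₂ - 4 R₁)`. Both remainders are `O(h²) ∫ ‖v'''‖`, and Cauchy–Schwarz on an
interval of length `2h` bounds `(∫ ‖v'''‖)²` by `2h ∫ ‖v'''‖²`.
-/

open Set MeasureTheory intervalIntegral

section Taylor

variable {E : Type*} [NormedAddCommGroup E] [NormedSpace ℝ E]

theorem hasDerivWithinAt_taylor_two {v v' v'' : ℝ → E} {d : E} {S : Set ℝ} {a s : ℝ}
    (hv : HasDerivWithinAt v (v' s) S s) (hv' : HasDerivWithinAt v' (v'' s) S s)
    (hv'' : HasDerivWithinAt v'' d S s) :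
    HasDerivWithinAt (fun u => v u + (a - u) • v' u + ((a - u) ^ 2 / 2) • v'' u)
      (((a - s) ^ 2 / 2) • d) S s := by
  have hlin : HasDerivWithinAt (fun u : ℝ => a - u) (-1) S s :=
    (hasDerivWithinAt_id s S).const_sub a
  have hquad : HasDerivWithinAt (fun u : ℝ => (a - u) ^ 2 / 2) (s - a) S s :=
    ((hlin.pow 2).div_const 2).congr_deriv (by norm_num; ring)
  exact ((hv.add (hlin.smul hv')).add (hquad.smul hv'')).congr_deriv (by module)

theorem taylor_two_integral_remainder [CompleteSpace E] {a b : ℝ} (hab : a ≤ b) {S : Set ℝ}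
    (hS : Icc a b ⊆ S) {v v' v'' v''' : ℝ → E}
    (hv : ∀ s ∈ Icc a b, HasDerivWithinAt v (v' s) S s)
    (hv' : ∀ s ∈ Icc a b, HasDerivWithinAt v' (v'' s) S s)
    (hv'' : ∀ s ∈ Icc a b, HasDerivWithinAt v'' (v''' s) S s)
    (hint : IntervalIntegrable v''' volume a b) :
    v a = v b + (a - b) • v' b + ((a - b) ^ 2 / 2) • v'' b
      - ∫ s in a..b, ((a - s) ^ 2 / 2) • v''' s := by
  have hderiv (s) (hs : s ∈ Icc a b) := hasDerivWithinAt_taylor_two (a := a)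
    (hv s hs) (hv' s hs) (hv'' s hs)
  have hftc := integral_eq_sub_of_hasDeriv_right_of_le hab
    (fun s hs => (hderiv s hs).continuousWithinAt.mono hS)
    (fun s hs => ((hderiv s (Ioo_subset_Icc_self hs)).hasDerivAt
      (Filter.mem_of_superset (Icc_mem_nhds hs.1 hs.2) hS)).hasDerivWithinAt)
    (hint.continuousOn_smul (by fun_prop))
  rw [hftc]
  simp

theorem norm_integral_taylor_two_remainder_le {c a b : ℝ} (hca : c ≤ a) (hab : a ≤ b)
    {w : ℝ → E} (hw : IntervalIntegrable w volume c b) :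
    ‖∫ s in a..b, ((a - s) ^ 2 / 2) • w s‖ ≤ (b - a) ^ 2 / 2 * ∫ s in c..b, ‖w s‖ := by
  have hw' : IntervalIntegrable w volume a b :=
    hw.mono_set (by rw [uIcc_of_le (hca.trans hab), uIcc_of_le hab]; exact Icc_subset_Icc hca le_rfl)
  calc ‖∫ s in a..b, ((a - s) ^ 2 / 2) • w s‖
      ≤ ∫ s in a..b, (b - a) ^ 2 / 2 * ‖w s‖ := by
        refine norm_integral_le_of_norm_le hab (ae_of_all _ fun s hs => ?_)
          (hw'.norm.const_mul _)
        rw [norm_smul, Real.norm_of_nonneg (by positivity)]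
        have hsq : (a - s) ^ 2 ≤ (b - a) ^ 2 := by nlinarith [hs.1, hs.2]
        gcongr
    _ = (b - a) ^ 2 / 2 * ∫ s in a..b, ‖w s‖ := intervalIntegral.integral_const_mul _ _
    _ ≤ (b - a) ^ 2 / 2 * ∫ s in c..b, ‖w s‖ := by
        gcongr
        exact integral_mono_interval hca hab le_rfl (ae_of_all _ fun _ => norm_nonneg _) hw.norm

end Taylor

theorem sq_intervalIntegral_le_mul_integral_sq {a b : ℝ} (hab : a ≤ b) {f : ℝ → ℝ}
    (hf : IntervalIntegrable f volume a b) (hf2 : IntervalIntegrable (fun s => f s ^ 2) volume a b) :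
    (∫ s in a..b, f s) ^ 2 ≤ (b - a) * ∫ s in a..b, f s ^ 2 := by
  set J := ∫ s in a..b, f s
  -- the variance of `(b - a) f` about its mean `J`
  have hvar : ∫ s in a..b, ((b - a) * f s - J) ^ 2
      = (b - a) * ((b - a) * (∫ s in a..b, f s ^ 2) - J ^ 2) := by
    have hexpand (s : ℝ) : ((b - a) * f s - J) ^ 2
        = (b - a) ^ 2 * f s ^ 2 - 2 * (b - a) * J * f s + J ^ 2 := by ring
    simp_rw [hexpand]
    rw [integral_add ((hf2.const_mul _).sub (hf.const_mul _)) intervalIntegrable_const,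
      integral_sub (hf2.const_mul _) (hf.const_mul _), intervalIntegral.integral_const_mul,
      intervalIntegral.integral_const_mul,
      intervalIntegral.integral_const, smul_eq_mul]
    ring
  have hnonneg : 0 ≤ ∫ s in a..b, ((b - a) * f s - J) ^ 2 :=
    integral_nonneg hab fun _ _ => sq_nonneg _
  rcases hab.eq_or_lt with rfl | hlt
  · simp [J]
  · rw [hvar] at hnonneg
    linarith [nonneg_of_mul_nonneg_right hnonneg (sub_pos.2 hlt)]

theorem sub_bdf2_eq_of_taylor {E : Type*} [AddCommGroup E] [Module ℝ E] {h : ℝ} (hh : h ≠ 0)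
    {x₀ x₁ x₂ d₁ d₂ R₁ R₂ : E}
    (h₁ : x₁ = x₀ + (-h) • d₁ + ((-h) ^ 2 / 2) • d₂ - R₁)
    (h₂ : x₂ = x₀ + (-(2 * h)) • d₁ + ((-(2 * h)) ^ 2 / 2) • d₂ - R₂) :
    d₁ - (1 / (2 * h)) • ((3 : ℝ) • x₀ - (4 : ℝ) • x₁ + x₂) = (1 / (2 * h)) • (R₂ - (4 : ℝ) • R₁) := by
  subst h₁ h₂
  match_scalars <;> field_simp <;> ring

theorem norm_sub_bdf2_le_of_taylor {E : Type*} [NormedAddCommGroup E] [NormedSpace ℝ E] {h J : ℝ}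
    (hh : 0 < h) {x₀ x₁ x₂ d₁ d₂ R₁ R₂ : E}
    (h₁ : x₁ = x₀ + (-h) • d₁ + ((-h) ^ 2 / 2) • d₂ - R₁)
    (h₂ : x₂ = x₀ + (-(2 * h)) • d₁ + ((-(2 * h)) ^ 2 / 2) • d₂ - R₂)
    (hR₁ : ‖R₁‖ ≤ h ^ 2 / 2 * J) (hR₂ : ‖R₂‖ ≤ (2 * h) ^ 2 / 2 * J) :
    ‖d₁ - (1 / (2 * h)) • ((3 : ℝ) • x₀ - (4 : ℝ) • x₁ + x₂)‖ ≤ 2 * h * J := by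
  rw [sub_bdf2_eq_of_taylor hh.ne' h₁ h₂, norm_smul, Real.norm_of_nonneg (by positivity)]
  calc _ ≤ 1 / (2 * h) * ((2 * h) ^ 2 / 2 * J + 4 * (h ^ 2 / 2 * J)) := by
        gcongr
        refine (norm_sub_le _ _).trans ?_
        rw [norm_smul, Real.norm_ofNat]
        linarith
    _ = 2 * h * J := by field_simp; ring

/-- BDF2 truncation error estimate (3.6c) of Lemma 3.5:
    ‖v'(t) - (3v(t) - 4v(t-h) + v(t-2h))/(2h)‖² ≤ C h³ ∫_{t-2h}^t ‖v'''(s)‖² ds. -/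
theorem bdf2_truncation_error_bound
    {E : Type*} [NormedAddCommGroup E] [NormedSpace ℝ E] [CompleteSpace E] :
    ∃ C : ℝ, 0 < C ∧
      ∀ (t h : ℝ), 0 < h →
        ∀ (v v' v'' v''' : ℝ → E),
          (∀ s ∈ Set.Icc (t - 2 * h) t,
              HasDerivWithinAt v (v' s) (Set.Icc (t - 2 * h) t) s) →
          (∀ s ∈ Set.Icc (t - 2 * h) t,
              HasDerivWithinAt v' (v'' s) (Set.Icc (t - 2 * h) t) s) →
          (∀ s ∈ Set.Icc (t - 2 * h) t,
              HasDerivWithinAt v'' (v''' s) (Set.Icc (t - 2 * h) t) s) →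
          ContinuousOn v''' (Set.Icc (t - 2 * h) t) →
          ‖v' t - (1 / (2 * h)) • ((3 : ℝ) • v t - (4 : ℝ) • v (t - h) + v (t - 2 * h))‖ ^ 2
            ≤ C * h ^ 3 * ∫ s in (t - 2 * h)..t, ‖v''' s‖ ^ 2 := by
  refine ⟨8, by norm_num, fun t h hh v v' v'' v''' hv hv' hv'' hc => ?_⟩
  have hle : t - 2 * h ≤ t - h := by linarith
  have hle' : t - h ≤ t := by linarith
  have hsub : Icc (t - h) t ⊆ Icc (t - 2 * h) t := Icc_subset_Icc hle le_rfl
  have hw : IntervalIntegrable v''' volume (t - 2 * h) t :=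
    hc.intervalIntegrable_of_Icc (hle.trans hle')
  have htaylor₁ := taylor_two_integral_remainder hle' hsub (fun s hs => hv s (hsub hs))
    (fun s hs => hv' s (hsub hs)) (fun s hs => hv'' s (hsub hs))
    ((hc.mono hsub).intervalIntegrable_of_Icc hle')
  have htaylor₂ := taylor_two_integral_remainder (hle.trans hle') subset_rfl hv hv' hv'' hw
  have hR₁ := norm_integral_taylor_two_remainder_le hle hle' hw
  have hR₂ := norm_integral_taylor_two_remainder_le le_rfl (hle.trans hle') hw
  have hCS := sq_intervalIntegral_le_mul_integral_sq (hle.trans hle') hw.norm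
    ((hc.norm.pow 2).intervalIntegrable_of_Icc (hle.trans hle'))
  rw [sub_sub_cancel_left] at htaylor₁ htaylor₂
  rw [sub_sub_cancel] at hR₁ hR₂ hCS
  have hbdf2 := norm_sub_bdf2_le_of_taylor hh htaylor₁ htaylor₂ hR₁ hR₂
  calc _ ≤ (2 * h * ∫ s in (t - 2 * h)..t, ‖v''' s‖) ^ 2 :=
        pow_le_pow_left₀ (norm_nonneg _) hbdf2 2
    _ ≤ 8 * h ^ 3 * ∫ s in (t - 2 * h)..t, ‖v''' s‖ ^ 2 := by nlinarith
end

section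
/- Let E be a real Banach space. There exists a constant C > 0 such that for every T > 0, every natural number N ≥ 2, with Δt := T/N and tₙ := n·Δt, and every function v : ℝ → E that is continuously differentiable on [0, T] with derivative v′, one has Δt·Σ_{n=2}^{N} ‖(3·v(tₙ) − 4·v(t_{n−1}) + v(t_{n−2}))/(2Δt)‖² ≤ C·∫_{0}^{T} ‖v′(s)‖² ds. -/
open intervalIntegral
open Set
open MeasureTheory (volume)

/-! The BDF2 numerator is `3 (v tₙ - v tₙ₋₁) - (v tₙ₋₁ - v tₙ₋₂)`, so its squared norm is at most
`18 ‖v tₙ - v tₙ₋₁‖² + 2 ‖v tₙ₋₁ - v tₙ₋₂‖²`. By the fundamental theorem of calculus and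
Cauchy–Schwarz, an increment over a cell satisfies `‖v b - v a‖² ≤ (b - a) ∫ₐᵇ ‖v'‖²`, so the
`n`-th term of the sum is at most `9/2` times the integral of `‖v'‖²` over the cell `[tₙ₋₁, tₙ]`
plus `1/2` times that over `[tₙ₋₂, tₙ₋₁]`. Each cell is counted at most twice, giving `C = 5`. -/

theorem sq_intervalIntegral_le_mul_intervalIntegral_sq {φ : ℝ → ℝ} {a b : ℝ} (hab : a ≤ b)
    (hφ : ContinuousOn φ (Icc a b)) :
    (∫ x in a..b, φ x) ^ 2 ≤ (b - a) * ∫ x in a..b, φ x ^ 2 := by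
  rcases hab.eq_or_lt with rfl | hlt
  · simp
  rw [← uIcc_of_le hab] at hφ
  have hφi : IntervalIntegrable φ volume a b := hφ.intervalIntegrable
  have hφ2i : IntervalIntegrable (fun x ↦ φ x ^ 2) volume a b :=
    (hφ.pow 2).intervalIntegrable
  set L := b - a
  set A := ∫ x in a..b, φ x
  set B := ∫ x in a..b, φ x ^ 2
  -- expanding `0 ≤ ∫ (L φ - A)²` gives `0 ≤ L (L B - A²)`
  have hexpand : ∫ x in a..b, (L * φ x - A) ^ 2 = L * (L * B - A ^ 2) := by
    simp only [sub_sq, mul_pow]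
    rw [integral_add ((hφ2i.const_mul _).sub (((hφi.const_mul L).const_mul 2).mul_const A))
        intervalIntegrable_const,
      integral_sub (hφ2i.const_mul _) (((hφi.const_mul L).const_mul 2).mul_const A),
      integral_const_mul, integral_mul_const, integral_const_mul, integral_const_mul,
      integral_const, smul_eq_mul]
    ring
  have hnonneg : 0 ≤ ∫ x in a..b, (L * φ x - A) ^ 2 := integral_nonneg hab fun _ _ ↦ sq_nonneg _
  have hLpos : 0 < L := sub_pos.2 hlt
  nlinarith

theorem norm_sub_le_intervalIntegral_norm_deriv {E : Type*} [NormedAddCommGroup E]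
    [NormedSpace ℝ E] {v v' : ℝ → E} {a b : ℝ} (hab : a ≤ b)
    (hv : ∀ x ∈ Icc a b, HasDerivWithinAt v (v' x) (Icc a b) x)
    (hv' : ContinuousOn v' (Icc a b)) :
    ‖v b - v a‖ ≤ ∫ x in a..b, ‖v' x‖ := by
  -- pass to the completion, where the fundamental theorem of calculus is available
  let ι := UniformSpace.Completion.toComplL (𝕜 := ℝ) (E := E)
  have hftc : ∫ x in a..b, ι (v' x) = ι (v b) - ι (v a) := by
    refine integral_eq_sub_of_hasDeriv_right_of_le hab
      (ι.continuous.comp_continuousOn fun x hx ↦ (hv x hx).continuousWithinAt) (fun x hx ↦ ?_)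
      ((ι.continuous.comp_continuousOn hv').intervalIntegrable_of_Icc hab)
    have hx' : x ∈ Icc a b := Ioo_subset_Icc_self hx
    exact (ι.hasFDerivAt.comp_hasDerivWithinAt x ((hv x hx').mono_of_mem_nhdsWithin
      (Icc_mem_nhdsGT_of_mem (Ioo_subset_Ico_self hx))))
  calc ‖v b - v a‖ = ‖ι (v b) - ι (v a)‖ := by
        rw [← map_sub]; exact (UniformSpace.Completion.norm_coe _).symm
    _ ≤ ∫ x in a..b, ‖ι (v' x)‖ := hftc ▸ norm_integral_le_integral_norm hab
    _ = ∫ x in a..b, ‖v' x‖ := by simp [ι, UniformSpace.Completion.norm_coe]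

theorem norm_sub_sq_le_mul_intervalIntegral_norm_deriv_sq {E : Type*} [NormedAddCommGroup E]
    [NormedSpace ℝ E] {v v' : ℝ → E} {a b : ℝ} (hab : a ≤ b)
    (hv : ∀ x ∈ Icc a b, HasDerivWithinAt v (v' x) (Icc a b) x)
    (hv' : ContinuousOn v' (Icc a b)) :
    ‖v b - v a‖ ^ 2 ≤ (b - a) * ∫ x in a..b, ‖v' x‖ ^ 2 :=
  (pow_le_pow_left₀ (norm_nonneg _) (norm_sub_le_intervalIntegral_norm_deriv hab hv hv') 2).trans
    (sq_intervalIntegral_le_mul_intervalIntegral_sq hab hv'.norm)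

theorem norm_bdf2_sq_le {E : Type*} [SeminormedAddCommGroup E] [NormedSpace ℝ E]
    (x₀ x₁ x₂ : E) :
    ‖(3 : ℝ) • x₂ - (4 : ℝ) • x₁ + x₀‖ ^ 2 ≤ 18 * ‖x₂ - x₁‖ ^ 2 + 2 * ‖x₁ - x₀‖ ^ 2 := by
  have hsplit : (3 : ℝ) • x₂ - (4 : ℝ) • x₁ + x₀ = (3 : ℝ) • (x₂ - x₁) - (x₁ - x₀) := by module
  have htri : ‖(3 : ℝ) • x₂ - (4 : ℝ) • x₁ + x₀‖ ≤ 3 * ‖x₂ - x₁‖ + ‖x₁ - x₀‖ := by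
    rw [hsplit]
    refine (norm_sub_le _ _).trans_eq ?_
    rw [norm_smul, Real.norm_ofNat]
  nlinarith [norm_nonneg ((3 : ℝ) • x₂ - (4 : ℝ) • x₁ + x₀), sq_nonneg (3 * ‖x₂ - x₁‖ - ‖x₁ - x₀‖)]

theorem mul_norm_bdf2_quotient_sq_le {E : Type*} [SeminormedAddCommGroup E] [NormedSpace ℝ E]
    {x₀ x₁ x₂ : E} {h I₀ I₁ : ℝ} (hh : 0 < h)
    (h₁ : ‖x₂ - x₁‖ ^ 2 ≤ h * I₁) (h₀ : ‖x₁ - x₀‖ ^ 2 ≤ h * I₀) :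
    h * ‖(1 / (2 * h)) • ((3 : ℝ) • x₂ - (4 : ℝ) • x₁ + x₀)‖ ^ 2 ≤ 9 / 2 * I₁ + 1 / 2 * I₀ := by
  rw [norm_smul, mul_pow, Real.norm_of_nonneg (by positivity)]
  calc h * ((1 / (2 * h)) ^ 2 * ‖(3 : ℝ) • x₂ - (4 : ℝ) • x₁ + x₀‖ ^ 2)
      ≤ h * ((1 / (2 * h)) ^ 2 * (18 * (h * I₁) + 2 * (h * I₀))) := by
        gcongr
        linarith [norm_bdf2_sq_le x₀ x₁ x₂]
    _ = 9 / 2 * I₁ + 1 / 2 * I₀ := by field_simp; ring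

theorem sum_range_intervalIntegral_uniform {g : ℝ → ℝ} {h : ℝ} {N : ℕ} (hh : 0 ≤ h)
    (hg : IntervalIntegrable g volume 0 (N * h)) :
    ∑ k ∈ Finset.range N, ∫ x in k * h..(k + 1) * h, g x = ∫ x in 0..N * h, g x := by
  have hcell : ∀ k < N, IntervalIntegrable g volume (k * h) ((k + 1 : ℕ) * h) := by
    intro k hk
    refine hg.mono_set ?_
    rw [uIcc_of_le (by gcongr; simp), uIcc_of_le (by positivity)]
    exact Icc_subset_Icc (by positivity) (by gcongr; exact_mod_cast hk)
  simpa using sum_integral_adjacent_intervals hcell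

theorem sum_range_add_shift_le {F : ℕ → ℝ} (hF : ∀ k, 0 ≤ F k) {α β : ℝ} (hα : 0 ≤ α)
    (hβ : 0 ≤ β) (M : ℕ) :
    ∑ k ∈ Finset.range M, (α * F (k + 1) + β * F k) ≤
      (α + β) * ∑ k ∈ Finset.range (M + 1), F k := by
  have h₁ : ∑ k ∈ Finset.range M, F (k + 1) ≤ ∑ k ∈ Finset.range (M + 1), F k := by
    rw [Finset.sum_range_succ']; linarith [hF 0]
  have h₀ : ∑ k ∈ Finset.range M, F k ≤ ∑ k ∈ Finset.range (M + 1), F k := by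
    rw [Finset.sum_range_succ]; linarith [hF M]
  rw [Finset.sum_add_distrib, ← Finset.mul_sum, ← Finset.mul_sum]
  nlinarith

theorem mul_norm_bdf2_quotient_sq_le_of_hasDerivWithinAt {E : Type*} [NormedAddCommGroup E]
    [NormedSpace ℝ E] {v v' : ℝ → E} {T h : ℝ}
    (hv : ∀ x ∈ Icc 0 T, HasDerivWithinAt v (v' x) (Icc 0 T) x) (hv' : ContinuousOn v' (Icc 0 T))
    (hh : 0 < h) {k : ℕ} (hk : (k + 2) * h ≤ T) :
    h * ‖(1 / (2 * h)) • ((3 : ℝ) • v ((k + 2) * h) - (4 : ℝ) • v ((k + 1) * h) + v (k * h))‖ ^ 2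
      ≤ 9 / 2 * (∫ s in (k + 1) * h..(k + 2) * h, ‖v' s‖ ^ 2)
        + 1 / 2 * ∫ s in k * h..(k + 1) * h, ‖v' s‖ ^ 2 := by
  have hincr : ∀ a b : ℝ, 0 ≤ a → b ≤ T → b - a = h →
      ‖v b - v a‖ ^ 2 ≤ h * ∫ s in a..b, ‖v' s‖ ^ 2 := by
    intro a b ha hb hba
    have hsub : Icc a b ⊆ Icc 0 T := Icc_subset_Icc ha hb
    simpa only [hba] using norm_sub_sq_le_mul_intervalIntegral_norm_deriv_sq (by linarith)
      (fun x hx ↦ (hv x (hsub hx)).mono hsub) (hv'.mono hsub)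
  exact mul_norm_bdf2_quotient_sq_le hh (hincr ((k + 1) * h) _ (by positivity) hk (by ring))
    (hincr (k * h) _ (by positivity) (by nlinarith) (by ring))

theorem bdf2_difference_quotient_sum_bound_general
    {E : Type*} [NormedAddCommGroup E] [NormedSpace ℝ E] :
    ∃ C : ℝ, 0 < C ∧
      ∀ (T : ℝ), 0 < T →
        ∀ (N : ℕ), 2 ≤ N →
          ∀ (v v' : ℝ → E),
            (∀ s ∈ Set.Icc (0 : ℝ) T,
                HasDerivWithinAt v (v' s) (Set.Icc (0 : ℝ) T) s) →
            ContinuousOn v' (Set.Icc (0 : ℝ) T) →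
            (T / N) * ∑ n ∈ Finset.Icc 2 N,
                ‖(1 / (2 * (T / N))) •
                    ((3 : ℝ) • v ((n : ℝ) * (T / N))
                      - (4 : ℝ) • v (((n : ℝ) - 1) * (T / N))
                      + v (((n : ℝ) - 2) * (T / N)))‖ ^ 2
              ≤ C * ∫ s in (0 : ℝ)..T, ‖v' s‖ ^ 2 := by
  refine ⟨5, by norm_num, fun T hT N hN v v' hv hv' ↦ ?_⟩
  obtain ⟨M, rfl⟩ : ∃ M, N = M + 2 := ⟨N - 2, by omega⟩
  set h := T / ((M + 2 : ℕ) : ℝ) with hh_def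
  have hh : 0 < h := by positivity
  have hT_eq : ((M + 2 : ℕ) : ℝ) * h = T := by rw [hh_def]; field_simp
  set F : ℕ → ℝ := fun k ↦ ∫ s in k * h..(k + 1) * h, ‖v' s‖ ^ 2
  have hF : ∀ k, 0 ≤ F k := fun k ↦ integral_nonneg (by gcongr; simp) fun _ _ ↦ sq_nonneg _
  have hint : IntervalIntegrable (fun s ↦ ‖v' s‖ ^ 2) volume 0 ((M + 2 : ℕ) * h) :=
    hT_eq ▸ (hv'.norm.pow 2).intervalIntegrable_of_Icc hT.le
  calc h * ∑ n ∈ Finset.Icc 2 (M + 2), _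
      = ∑ k ∈ Finset.range (M + 1), h * _ := by
        rw [← Finset.Ico_add_one_right_eq_Icc, Finset.sum_Ico_eq_sum_range, Finset.mul_sum,
          show M + 2 + 1 - 2 = M + 1 by omega]
    _ ≤ ∑ k ∈ Finset.range (M + 1), (9 / 2 * F (k + 1) + 1 / 2 * F k) := by
        refine Finset.sum_le_sum fun k hk ↦ ?_
        have hk : ((k : ℝ) + 2) * h ≤ T := hT_eq ▸ by
          gcongr; exact_mod_cast (by simpa using hk : k + 2 ≤ M + 2)
        rw [show ((2 + k : ℕ) : ℝ) = k + 2 by push_cast; ring, show (k : ℝ) + 2 - 1 = k + 1 by ring,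
          show (k : ℝ) + 2 - 2 = k by ring]
        refine (mul_norm_bdf2_quotient_sq_le_of_hasDerivWithinAt hv hv' hh hk).trans_eq ?_
        simp only [F]; push_cast; ring_nf
    _ ≤ (9 / 2 + 1 / 2) * ∑ k ∈ Finset.range (M + 2), F k :=
        sum_range_add_shift_le hF (by norm_num) (by norm_num) _
    _ = 5 * ∫ s in (0 : ℝ)..T, ‖v' s‖ ^ 2 := by
        rw [sum_range_intervalIntegral_uniform hh.le hint, hT_eq]; norm_num

/-- Summed form of estimate (3.6a): on the uniform partition tₙ = nΔt of [0,T],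
    Δt Σ_{n=2}^N ‖(3v(tₙ) - 4v(t_{n-1}) + v(t_{n-2}))/(2Δt)‖² ≤ C ∫_0^T ‖v'‖². -/
theorem bdf2_difference_quotient_sum_bound
    {E : Type*} [NormedAddCommGroup E] [NormedSpace ℝ E] [CompleteSpace E] :
    ∃ C : ℝ, 0 < C ∧
      ∀ (T : ℝ), 0 < T →
        ∀ (N : ℕ), 2 ≤ N →
          ∀ (v v' : ℝ → E),
            (∀ s ∈ Set.Icc (0 : ℝ) T,
                HasDerivWithinAt v (v' s) (Set.Icc (0 : ℝ) T) s) →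
            ContinuousOn v' (Set.Icc (0 : ℝ) T) →
            (T / N) * ∑ n ∈ Finset.Icc 2 N,
                ‖(1 / (2 * (T / N))) •
                    ((3 : ℝ) • v ((n : ℝ) * (T / N))
                      - (4 : ℝ) • v (((n : ℝ) - 1) * (T / N))
                      + v (((n : ℝ) - 2) * (T / N)))‖ ^ 2
              ≤ C * ∫ s in (0 : ℝ)..T, ‖v' s‖ ^ 2 :=
  bdf2_difference_quotient_sum_bound_general
end
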